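/- arXiv:2006.06879 — 2 statements merged into one kernel-verified Lean document; each statement's English description precedes it below -/
import Mathlib

section
/- In the uniform-density hinge-loss example with equal densities w₀ = w₁ and p = 0, along the adaptive sampling process started at λ₀ = λ* < 1/2, we have λ_{N(1−2λ₀)} = 1/2, and for all i ≥ N(1−2λ₀), |c_fair − c(λ_i)| ≤ 4(t₁ − t₀ + 1)/(N + i), where N = |S₀| is the initial sample size and c_fair = (t₀+t₁)/2. -/
open MeasureTheory Filter

/-- Expected hinge loss of the threshold classifier `sign (x - c)` for a group with
uniform density `w` on `[α, β]` and true threshold `t`. -/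
noncomputable def hingeExp (α β t w : ℝ) (c : ℝ) : ℝ :=
  ∫ x in Set.Icc α β, max 0 (1 - Real.sign (x - t) * (x - c)) * w

lemma measurable_realSign : Measurable Real.sign := by
  have h : Real.sign = fun r : ℝ => if r < 0 then (-1:ℝ) else if 0 < r then 1 else 0 := by
    funext r; rfl
  rw [h]
  exact Measurable.ite (measurableSet_lt measurable_id measurable_const) measurable_const
    (Measurable.ite (measurableSet_lt measurable_const measurable_id) measurable_const
      measurable_const)

lemma abs_realSign_le (y : ℝ) : |Real.sign y| ≤ 1 := by
  rcases lt_trichotomy y 0 with h | h | h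
  · rw [Real.sign_of_neg h]; norm_num
  · rw [h, Real.sign_zero]; norm_num
  · rw [Real.sign_of_pos h]; norm_num

lemma hinge_meas (t w c : ℝ) :
    Measurable (fun x => max 0 (1 - Real.sign (x - t) * (x - c)) * w) := by
  exact ((measurable_const.max ((measurable_const.sub
    (((measurable_realSign.comp (measurable_id.sub_const t)).mul
      (measurable_id.sub_const c))))))).mul measurable_const

lemma hinge_integrableOn (α β t w c : ℝ) :
    IntegrableOn (fun x => max 0 (1 - Real.sign (x - t) * (x - c)) * w) (Set.Icc α β) := by
  apply Measure.integrableOn_of_bounded (M := (1 + |α| + |β| + |c|) * |w|)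
  · exact (measure_Icc_lt_top).ne
  · exact (hinge_meas t w c).aestronglyMeasurable
  · rw [ae_restrict_iff' measurableSet_Icc]
    filter_upwards with x hx
    have hx1 : |x| ≤ |α| + |β| := by
      rcases hx with ⟨h1, h2⟩
      rw [abs_le]; constructor
      · nlinarith [abs_nonneg α, abs_nonneg β, neg_abs_le α, le_abs_self β]
      · nlinarith [abs_nonneg α, abs_nonneg β, neg_abs_le α, le_abs_self β]
    have h2 : |max 0 (1 - Real.sign (x - t) * (x - c))| ≤ 1 + |α| + |β| + |c| := by
      rw [abs_of_nonneg (le_max_left _ _)]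
      have := abs_realSign_le (x - t)
      have h3 : |Real.sign (x - t) * (x - c)| ≤ |x - c| := by
        rw [abs_mul]
        nlinarith [abs_nonneg (x - c)]
      have h4 : |x - c| ≤ |x| + |c| := abs_sub _ _
      rcases max_cases 0 (1 - Real.sign (x - t) * (x - c)) with ⟨he, _⟩ | ⟨he, _⟩ <;> rw [he]
      · positivity
      · have := neg_abs_le (Real.sign (x - t) * (x - c))
        linarith
    calc ‖max 0 (1 - Real.sign (x - t) * (x - c)) * w‖
        = |max 0 (1 - Real.sign (x - t) * (x - c))| * |w| := by rw [norm_mul]; rfl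
      _ ≤ (1 + |α| + |β| + |c|) * |w| := by
          apply mul_le_mul_of_nonneg_right h2 (abs_nonneg w)

lemma polyint (s C w a b : ℝ) :
    ∫ x in a..b, (s * x + C) * w = (s * (b^2 - a^2) / 2 + C * (b - a)) * w := by
  rw [intervalIntegral.integral_mul_const,
    intervalIntegral.integral_add ((intervalIntegral.intervalIntegrable_id).const_mul s)
      (intervalIntegrable_const), intervalIntegral.integral_const_mul, integral_id,
    intervalIntegral.integral_const]
  simp only [smul_eq_mul]
  ring

lemma hinge_formula (α β t w c : ℝ) (hα : α < t - 2) (hc1 : t - 1 ≤ c) (hc2 : c + 1 ≤ β) :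
    hingeExp α β t w c = w / 2 * ((1 + c - t)^2 + (max 0 (1 + t - c))^2) := by
  have hat : α ≤ t := by linarith
  have htb : t ≤ β := by linarith
  have hab : α ≤ β := le_trans hat htb
  set f := fun x => max 0 (1 - Real.sign (x - t) * (x - c)) * w with hf
  have hint : IntegrableOn f (Set.Icc α β) := hinge_integrableOn α β t w c
  have hIl : IntervalIntegrable f volume α t :=
    (hint.mono_set (by rw [Set.uIcc_of_le hat]; exact Set.Icc_subset_Icc le_rfl htb)).intervalIntegrable
  have hIr : IntervalIntegrable f volume t β :=
    (hint.mono_set (by rw [Set.uIcc_of_le htb]; exact Set.Icc_subset_Icc hat le_rfl)).intervalIntegrable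
  have hsplit : hingeExp α β t w c = (∫ x in α..t, f x) + ∫ x in t..β, f x := by
    rw [intervalIntegral.integral_add_adjacent_intervals hIl hIr]
    unfold hingeExp
    rw [MeasureTheory.integral_Icc_eq_integral_Ioc, ← intervalIntegral.integral_of_le hab]
  have hleft : (∫ x in α..t, f x) = ∫ x in α..t, max 0 (1 + x - c) * w := by
    rw [intervalIntegral.integral_of_le hat, intervalIntegral.integral_of_le hat,
      MeasureTheory.integral_Ioc_eq_integral_Ioo, MeasureTheory.integral_Ioc_eq_integral_Ioo]
    apply setIntegral_congr_fun measurableSet_Ioo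
    intro x hx
    have hxt : x - t < 0 := by have := hx.2; simp at this ⊢; linarith
    rw [hf]; simp only
    rw [Real.sign_of_neg hxt]
    congr 1
    congr 1
    ring
  have hright : (∫ x in t..β, f x) = ∫ x in t..β, max 0 (1 - x + c) * w := by
    rw [intervalIntegral.integral_of_le htb, intervalIntegral.integral_of_le htb,
      MeasureTheory.integral_Ioc_eq_integral_Ioo, MeasureTheory.integral_Ioc_eq_integral_Ioo]
    apply setIntegral_congr_fun measurableSet_Ioo
    intro x hx
    have hxt : 0 < x - t := by have := hx.1; simp at this ⊢; linarith
    rw [hf]; simp only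
    rw [Real.sign_of_pos hxt]
    congr 1
    congr 1
    ring
  -- continuity facts
  have contmax : ∀ s C : ℝ, Continuous (fun x : ℝ => max 0 (s * x + C) * w) := by
    intro s C
    exact (continuous_const.max ((continuous_const.mul continuous_id).add continuous_const)).mul
      continuous_const
  -- right piece value
  have hrightval : (∫ x in t..β, max 0 (1 - x + c) * w) = (1 + c - t)^2 / 2 * w := by
    have htc : t ≤ c + 1 := by linarith
    have heq : ∀ a b : ℝ, IntervalIntegrable (fun x => max 0 (1 - x + c) * w) volume a b := by
      intro a b
      have h1 := contmax (-1) (1 + c)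
      have h2 : (fun x : ℝ => max 0 ((-1) * x + (1 + c)) * w) = fun x => max 0 (1 - x + c) * w := by
        funext x; ring_nf
      rw [h2] at h1
      exact h1.intervalIntegrable a b
    rw [← intervalIntegral.integral_add_adjacent_intervals (b := c + 1) (heq t (c+1)) (heq (c+1) β)]
    have e1 : (∫ x in t..(c+1), max 0 (1 - x + c) * w) = ∫ x in t..(c+1), ((-1) * x + (1 + c)) * w := by
      apply intervalIntegral.integral_congr
      intro x hx
      rw [Set.uIcc_of_le htc] at hx
      have hnn : 0 ≤ 1 - x + c := by have := hx.2; linarith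
      simp only
      rw [max_eq_right hnn]; ring
    have e2 : (∫ x in (c+1)..β, max 0 (1 - x + c) * w) = 0 := by
      have hEq : Set.EqOn (fun x => max 0 (1 - x + c) * w) (fun _ => (0:ℝ)) (Set.uIcc (c+1) β) := by
        intro x hx
        rw [Set.uIcc_of_le hc2] at hx
        have h' : 1 - x + c ≤ 0 := by have := hx.1; linarith
        simp only
        rw [max_eq_left h']; ring
      rw [intervalIntegral.integral_congr hEq]; simp
    rw [e1, e2, polyint]
    ring
  have hleftval : (∫ x in α..t, max 0 (1 + x - c) * w) = (max 0 (1 + t - c))^2 / 2 * w := by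
    have heq : ∀ a b : ℝ, IntervalIntegrable (fun x => max 0 (1 + x - c) * w) volume a b := by
      intro a b
      have h1 := contmax 1 (1 - c)
      have h2 : (fun x : ℝ => max 0 (1 * x + (1 - c)) * w) = fun x => max 0 (1 + x - c) * w := by
        funext x; ring_nf
      rw [h2] at h1
      exact h1.intervalIntegrable a b
    rcases le_or_gt c (t + 1) with hct | hct
    · have ha1 : α ≤ c - 1 := by linarith
      have ha2 : c - 1 ≤ t := by linarith
      rw [← intervalIntegral.integral_add_adjacent_intervals (b := c - 1) (heq α (c-1)) (heq (c-1) t)]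
      have e1 : (∫ x in α..(c-1), max 0 (1 + x - c) * w) = 0 := by
        have hEq : Set.EqOn (fun x => max 0 (1 + x - c) * w) (fun _ => (0:ℝ)) (Set.uIcc α (c-1)) := by
          intro x hx
          rw [Set.uIcc_of_le ha1] at hx
          have h' : 1 + x - c ≤ 0 := by have := hx.2; linarith
          simp only
          rw [max_eq_left h']; ring
        rw [intervalIntegral.integral_congr hEq]; simp
      have e2 : (∫ x in (c-1)..t, max 0 (1 + x - c) * w) = ∫ x in (c-1)..t, (1 * x + (1 - c)) * w := by
        apply intervalIntegral.integral_congr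
        intro x hx
        rw [Set.uIcc_of_le ha2] at hx
        have hnn : 0 ≤ 1 + x - c := by have := hx.1; linarith
        simp only
        rw [max_eq_right hnn]; ring
      have hm : max 0 (1 + t - c) = 1 + t - c := max_eq_right (by linarith)
      rw [e1, e2, polyint, hm]
      ring
    · have e1 : (∫ x in α..t, max 0 (1 + x - c) * w) = 0 := by
        have hEq : Set.EqOn (fun x => max 0 (1 + x - c) * w) (fun _ => (0:ℝ)) (Set.uIcc α t) := by
          intro x hx
          rw [Set.uIcc_of_le hat] at hx
          have h' : 1 + x - c ≤ 0 := by have := hx.2; linarith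
          simp only
          rw [max_eq_left h']; ring
        rw [intervalIntegral.integral_congr hEq]; simp
      have hm : max 0 (1 + t - c) = 0 := max_eq_left (by linarith)
      rw [e1, hm]
      ring
  rw [hsplit, hleft, hright, hleftval, hrightval]
  ring

lemma hinge_reflect (α β t w c : ℝ) (hab : α ≤ β) :
    hingeExp α β t w c = hingeExp (-β) (-α) (-t) w (-c) := by
  unfold hingeExp
  have hab' : -β ≤ -α := by linarith
  rw [MeasureTheory.integral_Icc_eq_integral_Ioc, ← intervalIntegral.integral_of_le hab,
    MeasureTheory.integral_Icc_eq_integral_Ioc, ← intervalIntegral.integral_of_le hab']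
  have key : (fun x : ℝ => max 0 (1 - Real.sign (x - t) * (x - c)) * w)
      = fun x : ℝ => max 0 (1 - Real.sign (-x - -t) * (-x - -c)) * w := by
    funext x
    congr 2
    rcases lt_trichotomy x t with h | h | h
    · rw [Real.sign_of_neg (by linarith : x - t < 0),
        Real.sign_of_pos (by linarith : (0:ℝ) < -x - -t)]
      ring
    · subst h; simp
    · rw [Real.sign_of_pos (by linarith : (0:ℝ) < x - t),
        Real.sign_of_neg (by linarith : -x - -t < 0)]
      ring
  rw [key, intervalIntegral.integral_comp_neg (fun x => max 0 (1 - Real.sign (x - -t) * (x - -c)) * w)]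

lemma hinge_nonneg (α β t w c : ℝ) (hw : 0 ≤ w) : 0 ≤ hingeExp α β t w c := by
  apply MeasureTheory.setIntegral_nonneg measurableSet_Icc
  intro x _
  exact mul_nonneg (le_max_left _ _) hw

lemma hinge_lb (α β t w c b : ℝ) (hw : 0 ≤ w) (ht : α < t) (hb1 : t < b) (hb2 : b ≤ β) :
    w * ((b - t) * (1 + c - (t + b) / 2)) ≤ hingeExp α β t w c := by
  set f := fun x => max 0 (1 - Real.sign (x - t) * (x - c)) * w with hf
  have hint : IntegrableOn f (Set.Icc α β) := hinge_integrableOn α β t w c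
  have hsub : Set.Ioc t b ⊆ Set.Icc α β := fun x hx =>
    ⟨le_of_lt (lt_trans ht hx.1), le_trans hx.2 hb2⟩
  have h1 : (∫ x in Set.Ioc t b, f x) ≤ hingeExp α β t w c := by
    unfold hingeExp
    apply setIntegral_mono_set hint
    · filter_upwards with x
      exact mul_nonneg (le_max_left _ _) hw
    · exact HasSubset.Subset.eventuallyLE hsub
  have h2 : (∫ x in Set.Ioc t b, (fun x => ((-1) * x + (1 + c)) * w) x)
      ≤ ∫ x in Set.Ioc t b, f x := by
    apply setIntegral_mono_on
    · exact (((continuous_const.mul continuous_id).add continuous_const).mul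
        continuous_const).integrableOn_Ioc
    · exact hint.mono_set hsub
    · exact measurableSet_Ioc
    · intro x hx
      rw [hf]; simp only
      rw [Real.sign_of_pos (by linarith [hx.1] : (0:ℝ) < x - t)]
      apply mul_le_mul_of_nonneg_right _ hw
      refine le_trans (le_of_eq (by ring)) (le_max_right _ _)
  have h3 : (∫ x in Set.Ioc t b, (fun x => ((-1) * x + (1 + c)) * w) x)
      = w * ((b - t) * (1 + c - (t + b) / 2)) := by
    rw [← intervalIntegral.integral_of_le (le_of_lt hb1), polyint]
    ring
  linarith

set_option maxHeartbeats 1000000 in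
lemma main_bound (α₀ β₀ α₁ β₁ t₀ t₁ : ℝ)
    (h1 : α₀ + 1 < α₁ + 1) (h2 : α₁ + 1 < t₀ - 1) (h3 : t₀ + 1 < t₁ - 1)
    (h4 : t₁ + 1 < β₀ - 1) (h5 : β₀ - 1 < β₁ - 1)
    (hw : β₀ - α₀ = β₁ - α₁)
    (lam ch : ℝ) (hl1 : 1/2 ≤ lam) (hl2 : lam ≤ 3/4)
    (hkey : lam * hingeExp α₀ β₀ t₀ (1 / (β₀ - α₀)) ch
          + (1 - lam) * hingeExp α₁ β₁ t₁ (1 / (β₁ - α₁)) ch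
        ≤ lam * hingeExp α₀ β₀ t₀ (1 / (β₀ - α₀)) ((t₀ + t₁) / 2)
          + (1 - lam) * hingeExp α₁ β₁ t₁ (1 / (β₁ - α₁)) ((t₀ + t₁) / 2)) :
    |(t₀ + t₁) / 2 - ch| ≤ (2 * (t₁ - t₀) + 4) * (lam - 1/2) := by
  set w : ℝ := 1 / (β₀ - α₀) with hwdef
  have hba : (0:ℝ) < β₀ - α₀ := by linarith
  have hw0 : 0 < w := by rw [hwdef]; positivity
  have hww : 1 / (β₁ - α₁) = w := by rw [hwdef, hw]
  rw [hww] at hkey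
  have hd : t₀ + 2 < t₁ := by linarith
  -- formula for group 1 at any admissible point, via reflection
  have hform1 : ∀ y : ℝ, α₁ + 1 ≤ y → y ≤ t₁ + 1 →
      hingeExp α₁ β₁ t₁ w y = w / 2 * ((1 + t₁ - y)^2 + (max 0 (1 - t₁ + y))^2) := by
    intro y hy1 hy2
    rw [hinge_reflect α₁ β₁ t₁ w y (by linarith)]
    rw [hinge_formula (-β₁) (-α₁) (-t₁) w (-y) (by linarith) (by linarith) (by linarith)]
    have e1 : 1 + -y - -t₁ = 1 + t₁ - y := by ring
    have e2 : 1 + -t₁ - -y = 1 - t₁ + y := by ring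
    rw [e1, e2]
  -- formulas at mid
  have hmid0 : hingeExp α₀ β₀ t₀ w ((t₀ + t₁) / 2) = w / 2 * (1 + (t₁ - t₀)/2)^2 := by
    rw [hinge_formula α₀ β₀ t₀ w ((t₀ + t₁) / 2) (by linarith) (by linarith) (by linarith)]
    have hz : max 0 (1 + t₀ - (t₀ + t₁) / 2) = 0 := max_eq_left (by linarith)
    rw [hz]; ring_nf
  have hmid1 : hingeExp α₁ β₁ t₁ w ((t₀ + t₁) / 2) = w / 2 * (1 + (t₁ - t₀)/2)^2 := by
    rw [hform1 ((t₀ + t₁) / 2) (by linarith) (by linarith)]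
    have hz : max 0 (1 - t₁ + (t₀ + t₁) / 2) = 0 := max_eq_left (by linarith)
    rw [hz]; ring_nf
  rw [hmid0, hmid1] at hkey
  set H₀ : ℝ := hingeExp α₀ β₀ t₀ w ch with hH0def
  set H₁ : ℝ := hingeExp α₁ β₁ t₁ w ch with hH1def
  have hkey2 : lam * H₀ + (1 - lam) * H₁ ≤ w / 2 * (1 + (t₁ - t₀)/2)^2 := by
    refine le_trans (le_of_eq rfl) (le_trans hkey (le_of_eq ?_))
    ring
  -- step 2 : ch ∈ [t₀ - 1, t₁ + 1]
  have hch_lb : t₀ - 1 ≤ ch := by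
    by_contra hcon
    push_neg at hcon
    have hH0nn : 0 ≤ H₀ := hinge_nonneg _ _ _ _ _ hw0.le
    have hH1lb : w * ((-t₀ + 2 - -t₁) * (1 + -ch - (-t₁ + (-t₀ + 2)) / 2))
        ≤ hingeExp (-β₁) (-α₁) (-t₁) w (-ch) :=
      hinge_lb (-β₁) (-α₁) (-t₁) w (-ch) (-t₀ + 2) hw0.le (by linarith) (by linarith) (by linarith)
    rw [← hinge_reflect α₁ β₁ t₁ w ch (by linarith), ← hH1def] at hH1lb
    set X : ℝ := w * ((t₁ - t₀ + 2) * ((t₀ + t₁) / 2 - ch)) with hXdef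
    have hq : X ≤ H₁ := by
      refine le_trans (le_of_eq ?_) hH1lb
      rw [hXdef]; ring
    have hXnn : 0 ≤ X := by
      rw [hXdef]
      have : (0:ℝ) ≤ (t₁ - t₀ + 2) * ((t₀ + t₁) / 2 - ch) :=
        mul_nonneg (by linarith) (by linarith)
      positivity
    have hclean : (1/4) * X ≤ w / 2 * (1 + (t₁ - t₀)/2)^2 := by
      nlinarith [mul_le_mul_of_nonneg_left hq (show (0:ℝ) ≤ 1 - lam by linarith),
        mul_nonneg (show (0:ℝ) ≤ lam by linarith) hH0nn,
        mul_nonneg (show (0:ℝ) ≤ 3/4 - lam by linarith) hXnn]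
    have hsplitX : X = w * ((t₁ - t₀ + 2) * ((t₁ - t₀)/2 + 1))
        + w * ((t₁ - t₀ + 2) * (t₀ - 1 - ch)) := by
      rw [hXdef]; ring
    have hq2 : w / 2 * (1 + (t₁ - t₀)/2)^2
        = (1/4) * (w * ((t₁ - t₀ + 2) * ((t₁ - t₀)/2 + 1))) := by ring
    have hprod : 0 < w * ((t₁ - t₀ + 2) * (t₀ - 1 - ch)) :=
      mul_pos hw0 (mul_pos (by linarith) (by linarith))
    linarith
  have hch_ub : ch ≤ t₁ + 1 := by
    by_contra hcon
    push_neg at hcon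
    have hH1nn : 0 ≤ H₁ := hinge_nonneg _ _ _ _ _ hw0.le
    have hH0lb : w * ((t₁ + 2 - t₀) * (1 + ch - (t₀ + (t₁ + 2)) / 2)) ≤ H₀ :=
      hinge_lb α₀ β₀ t₀ w ch (t₁ + 2) hw0.le (by linarith) (by linarith) (by linarith)
    set X : ℝ := w * ((t₁ + 2 - t₀) * (1 + ch - (t₀ + (t₁ + 2)) / 2)) with hXdef
    have hXnn : 0 ≤ X := by
      rw [hXdef]
      have : (0:ℝ) ≤ (t₁ + 2 - t₀) * (1 + ch - (t₀ + (t₁ + 2)) / 2) :=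
        mul_nonneg (by linarith) (by linarith)
      positivity
    have hclean : (1/2) * X ≤ w / 2 * (1 + (t₁ - t₀)/2)^2 := by
      nlinarith [mul_le_mul_of_nonneg_left hH0lb (show (0:ℝ) ≤ lam by linarith),
        mul_nonneg (show (0:ℝ) ≤ 1 - lam by linarith) hH1nn,
        mul_nonneg (show (0:ℝ) ≤ lam - 1/2 by linarith) hXnn]
    have hsplitX : X = w * ((t₁ - t₀ + 2) * ((t₁ - t₀)/2 + 1))
        + w * ((t₁ - t₀ + 2) * (ch - t₁ - 1)) := by
      rw [hXdef]; ring
    have hq2 : w / 2 * (1 + (t₁ - t₀)/2)^2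
        = (1/4) * (w * ((t₁ - t₀ + 2) * ((t₁ - t₀)/2 + 1))) := by ring
    have hprod : 0 < w * ((t₁ - t₀ + 2) * (ch - t₁ - 1)) :=
      mul_pos hw0 (mul_pos (by linarith) (by linarith))
    have hApos : 0 < w * ((t₁ - t₀ + 2) * ((t₁ - t₀)/2 + 1)) :=
      mul_pos hw0 (mul_pos (by linarith) (by linarith))
    linarith
  -- step 3 : formulas at ch
  have hch0 : H₀ = w / 2 * ((1 + ch - t₀)^2 + (max 0 (1 + t₀ - ch))^2) := by
    rw [hH0def]
    exact hinge_formula α₀ β₀ t₀ w ch (by linarith) (by linarith) (by linarith)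
  have hch1 : H₁ = w / 2 * ((1 + t₁ - ch)^2 + (max 0 (1 - t₁ + ch))^2) := by
    rw [hH1def]
    exact hform1 ch (by linarith) (by linarith)
  set M₀ : ℝ := max 0 (1 + t₀ - ch) with hM0
  set M₁ : ℝ := max 0 (1 - t₁ + ch) with hM1
  have hM0nn : 0 ≤ M₀ := le_max_left _ _
  have hM1nn : 0 ≤ M₁ := le_max_left _ _
  rw [hch0, hch1] at hkey2
  -- divide out w
  have hP : lam * ((1 + ch - t₀)^2 + M₀^2) + (1 - lam) * ((1 + t₁ - ch)^2 + M₁^2)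
      ≤ (1 + (t₁ - t₀)/2)^2 := by
    have hkey3 : w / 2 * (lam * ((1 + ch - t₀)^2 + M₀^2)
        + (1 - lam) * ((1 + t₁ - ch)^2 + M₁^2))
        ≤ w / 2 * (1 + (t₁ - t₀)/2)^2 := by
      refine le_trans (le_of_eq ?_) hkey2
      ring
    exact le_of_mul_le_mul_left hkey3 (by positivity)
  have hQd : (0:ℝ) ≤ (2 * (t₁ - t₀) + 4) * (lam - 1/2) :=
    mul_nonneg (by linarith) (by linarith)
  rcases le_or_gt ch ((t₀ + t₁) / 2) with hcase | hcase
  · -- ch ≤ mid : M₁ = 0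
    have hM1z : M₁ = 0 := by
      rw [hM1]
      exact max_eq_left (by linarith)
    rw [hM1z] at hP
    rw [abs_of_nonneg (by linarith)]
    set u : ℝ := (t₀ + t₁) / 2 - ch with hu
    have hexp : lam * ((1 + ch - t₀)^2 + M₀^2) + (1 - lam) * ((1 + t₁ - ch)^2 + (0:ℝ)^2)
        = (1 + (t₁ - t₀)/2)^2 + u * u - ((2 * (t₁ - t₀) + 4) * (lam - 1/2)) * u
          + lam * M₀^2 := by
      rw [hu]; ring
    have hM0nn2 : 0 ≤ lam * M₀^2 :=
      mul_nonneg (by linarith) (sq_nonneg M₀)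
    have huu : u * u ≤ ((2 * (t₁ - t₀) + 4) * (lam - 1/2)) * u := by
      linarith [hP, hexp, hM0nn2]
    by_contra hgt
    push_neg at hgt
    have hu0 : 0 < u := lt_of_le_of_lt hQd hgt
    linarith [mul_lt_mul_of_pos_right hgt hu0, huu]
  · -- ch > mid : all terms nonnegative force ch = mid
    set e : ℝ := ch - (t₀ + t₁) / 2 with he
    have hexp : lam * ((1 + ch - t₀)^2 + M₀^2) + (1 - lam) * ((1 + t₁ - ch)^2 + M₁^2)
        = (1 + (t₁ - t₀)/2)^2 + e * e + ((2 * (t₁ - t₀) + 4) * (lam - 1/2)) * e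
          + lam * M₀^2 + (1 - lam) * M₁^2 := by
      rw [he]; ring
    have he2 : e * e ≤ 0 := by
      have n1 : 0 ≤ lam * M₀^2 := mul_nonneg (by linarith) (sq_nonneg M₀)
      have n2 : 0 ≤ (1 - lam) * M₁^2 := mul_nonneg (by linarith) (sq_nonneg M₁)
      have n3 : 0 ≤ ((2 * (t₁ - t₀) + 4) * (lam - 1/2)) * e :=
        mul_nonneg hQd (by rw [he]; linarith)
      nlinarith [hP, hexp, n1, n2, n3]
    have he0 : e = 0 := by
      have h' : e * e = 0 := le_antisymm he2 (mul_self_nonneg e)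
      exact mul_self_eq_zero.mp h'
    have hche : ch = (t₀ + t₁) / 2 := by rw [he] at he0; linarith
    rw [hche]
    simp only [sub_self, abs_zero]
    exact hQd
set_option maxHeartbeats 1000000 in
theorem stmt_16 (α₀ β₀ α₁ β₁ t₀ t₁ : ℝ)
    (h1 : α₀ + 1 < α₁ + 1) (h2 : α₁ + 1 < t₀ - 1) (h3 : t₀ + 1 < t₁ - 1)
    (h4 : t₁ + 1 < β₀ - 1) (h5 : β₀ - 1 < β₁ - 1)
    (hw : β₀ - α₀ = β₁ - α₁)
    (c : ℝ → ℝ)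
    (hmin : ∀ lam ∈ Set.Icc (0:ℝ) 1, ∀ y,
      lam * hingeExp α₀ β₀ t₀ (1 / (β₀ - α₀)) (c lam)
          + (1 - lam) * hingeExp α₁ β₁ t₁ (1 / (β₁ - α₁)) (c lam)
        ≤ lam * hingeExp α₀ β₀ t₀ (1 / (β₀ - α₀)) y
          + (1 - lam) * hingeExp α₁ β₁ t₁ (1 / (β₁ - α₁)) y)
    (lam : ℕ → ℝ) (N : ℕ) (hN : 1 ≤ N)
    (h0pos : 0 ≤ lam 0) (h0half : lam 0 < 1 / 2)
    -- the adaptive recurrence with p = 0 and λ*_U = 1/2 (which is the fair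
    -- mixture weight when w₀ = w₁)
    (hrec : ∀ i : ℕ, lam (i + 1) =
      ((N + i : ℝ) * lam i + (if lam i ≤ 1 / 2 then (1:ℝ) else 0)) / (N + i + 1))
    (m : ℕ) (hm : (m : ℝ) = N * (1 - 2 * lam 0)) :
    lam m = 1 / 2 ∧
    ∀ i : ℕ, m ≤ i →
      |(t₀ + t₁) / 2 - c (lam i)| ≤ 4 * (t₁ - t₀ + 1) / (N + i) := by
  have hNpos : (0:ℝ) < N := by exact_mod_cast hN
  have hNl : (N:ℝ) * lam 0 = ((N:ℝ) - m) / 2 := by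
    have h' : (m:ℝ) = (N:ℝ) - 2 * ((N:ℝ) * lam 0) := by rw [hm]; ring
    linarith
  -- closed form up to m
  have hform : ∀ i : ℕ, i ≤ m → lam i = ((N:ℝ) * lam 0 + i) / (N + i) := by
    intro i
    induction i with
    | zero =>
      intro _
      push_cast
      rw [add_zero, add_zero]
      field_simp
    | succ n ih =>
      intro hn1
      have hn : n ≤ m := Nat.le_of_succ_le hn1
      have hnm : (n:ℝ) ≤ (m:ℝ) := by exact_mod_cast hn
      have hval := ih hn
      have hNn : (0:ℝ) < (N:ℝ) + n := by positivity
      have hle : lam n ≤ 1 / 2 := by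
        rw [hval]
        rw [div_le_iff₀ hNn]
        rw [hNl]
        linarith
      rw [hrec n, if_pos hle, hval]
      push_cast
      field_simp
      ring
  have hlam_m : lam m = 1 / 2 := by
    have := hform m le_rfl
    rw [this, hNl]
    have hNm : (0:ℝ) < (N:ℝ) + m := by positivity
    field_simp
    ring
  refine ⟨hlam_m, ?_⟩
  -- behaviour after m
  have hpost : ∀ k : ℕ, lam (m + 2 * k) = 1 / 2 ∧
      lam (m + 2 * k + 1)
        = ((N:ℝ) + (m + 2 * k) + 2) / (2 * ((N:ℝ) + (m + 2 * k) + 1)) := by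
    intro k
    induction k with
    | zero =>
      constructor
      · simpa using hlam_m
      · simp only [Nat.mul_zero, Nat.add_zero]
        rw [hrec m, if_pos hlam_m.le, hlam_m]
        have : (0:ℝ) < (N:ℝ) + m + 1 := by positivity
        push_cast
        field_simp
        try ring
    | succ k ih =>
      have hMpos : (0:ℝ) < (N:ℝ) + (m + 2 * k) + 1 := by positivity
      have hM2 : (0:ℝ) < (N:ℝ) + (m + 2 * k) + 2 := by positivity
      have hgt : ¬ (lam (m + 2 * k + 1) ≤ 1 / 2) := by
        rw [ih.2]
        push_neg
        rw [lt_div_iff₀ (by linarith)]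
        linarith
      have hstep : lam (m + 2 * (k + 1)) = 1 / 2 := by
        have h' := hrec (m + 2 * k + 1)
        have hidx : m + 2 * (k + 1) = m + 2 * k + 1 + 1 := by ring
        rw [hidx, h', if_neg hgt, ih.2]
        push_cast
        rw [add_zero]
        have e1 : ((N:ℝ) + (↑m + 2*↑k) + 1) ≠ 0 := by positivity
        have e2 : ((N:ℝ) + (↑m + 2*↑k + 1) + 1) ≠ 0 := by positivity
        field_simp
        ring
      constructor
      · exact hstep
      · have h' := hrec (m + 2 * (k + 1))
        rw [h', if_pos hstep.le, hstep]
        have : (0:ℝ) < (N:ℝ) + (m + 2 * (k + 1)) + 1 := by positivity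
        push_cast
        field_simp
        try ring
  -- final bound
  intro i hi
  have hNi : (0:ℝ) < (N:ℝ) + i := by positivity
  have hd : t₀ + 2 < t₁ := by linarith
  -- two cases on the value of lam i
  have hcases : lam i = 1 / 2 ∨
      (lam i = ((N:ℝ) + i + 1) / (2 * ((N:ℝ) + i)) ∧ 1 ≤ i) := by
    rcases Nat.even_or_odd (i - m) with ⟨k, hk⟩ | ⟨k, hk⟩
    · left
      have : i = m + 2 * k := by omega
      rw [this]
      exact (hpost k).1
    · right
      have hik : i = m + 2 * k + 1 := by omega
      constructor
      · rw [hik]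
        have := (hpost k).2
        rw [this]
        push_cast
        ring_nf
      · omega
  -- apply main_bound
  have hbound : ∀ l : ℝ, lam i = l → 1/2 ≤ l → l ≤ 3/4 →
      |(t₀ + t₁) / 2 - c (lam i)| ≤ (2 * (t₁ - t₀) + 4) * (l - 1/2) := by
    intro l hl hl1 hl2
    rw [hl]
    exact main_bound α₀ β₀ α₁ β₁ t₀ t₁ h1 h2 h3 h4 h5 hw l (c l) hl1 hl2
      (hmin l ⟨by linarith, by linarith⟩ ((t₀ + t₁) / 2))
  rcases hcases with hval | ⟨hval, hige⟩
  · have := hbound (1/2) hval le_rfl (by norm_num)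
    have h0 : (0:ℝ) ≤ 4 * (t₁ - t₀ + 1) / (N + i) := by
      apply div_nonneg (by linarith) (by linarith)
    simpa using le_trans this (by simpa using h0)
  · have hige' : (1:ℝ) ≤ (N:ℝ) + i := by
      have : (1:ℝ) ≤ (N:ℝ) := by exact_mod_cast hN
      linarith
    have hNi2 : (2:ℝ) ≤ (N:ℝ) + i := by
      have hi1 : (1:ℝ) ≤ (i:ℝ) := by exact_mod_cast hige
      have hN1 : (1:ℝ) ≤ (N:ℝ) := by exact_mod_cast hN
      linarith
    have hl1 : 1/2 ≤ ((N:ℝ) + i + 1) / (2 * ((N:ℝ) + i)) := by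
      rw [le_div_iff₀ (by linarith)]
      linarith
    have hl2 : ((N:ℝ) + i + 1) / (2 * ((N:ℝ) + i)) ≤ 3/4 := by
      rw [div_le_iff₀ (by linarith)]
      linarith
    have hres := hbound _ hval hl1 hl2
    refine le_trans hres ?_
    have hdelta : ((N:ℝ) + i + 1) / (2 * ((N:ℝ) + i)) - 1/2 = 1 / (2 * ((N:ℝ) + i)) := by
      field_simp
      ring
    rw [hdelta]
    have heq2 : (2 * (t₁ - t₀) + 4) * (1 / (2 * ((N:ℝ) + i))) = (t₁ - t₀ + 2) / ((N:ℝ) + i) := by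
      field_simp
      ring
    rw [heq2, div_le_div_iff₀ hNi hNi]
    nlinarith [hNi, hd]
end

section
/- In the uniform-density hinge-loss example with w₀ = w₁, the map λ ↦ c(λ) (minimizer of the λ-mixture expected hinge loss) satisfies the Lipschitz bound |c(λ) − c(λ')| ≤ 2(t₁ − t₀ + 1)·|λ − λ'| for all λ, λ' ∈ [0,1]. -/
open MeasureTheory

/-! The expected hinge loss is `w * hingeRisk`, a piecewise quadratic in the threshold with
explicit derivative `hingeSlope`. A minimiser `c λ` of the `λ`-mixture is thus a zero of
`λ S₀ + (1 - λ) S₁` (with `Sᵢ` the two slopes), and the signs of the slopes outside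
`[t₀ - 1, t₁ + 1]` confine it to that interval. There both slopes increase at rate at least `1`
while `|S₀ - S₁| ≤ t₁ - t₀ + 2`, so comparing the first-order conditions at `λ` and `λ'` gives
`|c λ - c λ'| ≤ (t₁ - t₀ + 2) |λ - λ'|`. -/

open Set Filter

theorem hasDerivAt_max_zero_sq (u : ℝ) :
    HasDerivAt (fun v : ℝ => max 0 v ^ 2) (2 * max 0 u) u := by
  rw [hasDerivAt_iff_isLittleO_nhds_zero]
  refine (Asymptotics.IsBigO.of_bound 1 (Eventually.of_forall fun h => ?_)).trans_isLittleO
    (Asymptotics.isLittleO_pow_id one_lt_two)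
  rw [one_mul, Real.norm_eq_abs, Real.norm_eq_abs, abs_of_nonneg (sq_nonneg h), smul_eq_mul,
    abs_le]
  simp only [max_def]
  split_ifs <;> constructor <;> nlinarith

theorem HasDerivAt.max_zero_sq {f : ℝ → ℝ} {f' x : ℝ} (hf : HasDerivAt f f' x) :
    HasDerivAt (fun y => max 0 (f y) ^ 2) (2 * max 0 (f x) * f') x :=
  (hasDerivAt_max_zero_sq (f x)).comp x hf

theorem intervalIntegral_max_zero_add (a b k : ℝ) :
    ∫ x in a..b, max 0 (x + k) = (max 0 (b + k) ^ 2 - max 0 (a + k) ^ 2) / 2 := by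
  have hderiv : ∀ x ∈ uIcc a b,
      HasDerivAt (fun y => max 0 (y + k) ^ 2 / 2) (max 0 (x + k)) x := fun x _ =>
    (((hasDerivAt_id x).add_const k).max_zero_sq.div_const 2).congr_deriv (by simp)
  rw [intervalIntegral.integral_eq_sub_of_hasDerivAt hderiv
    ((by fun_prop : Continuous fun x : ℝ => max 0 (x + k)).intervalIntegrable _ _)]
  ring

theorem intervalIntegral_max_zero_sub (a b k : ℝ) :
    ∫ x in a..b, max 0 (k - x) = (max 0 (k - a) ^ 2 - max 0 (k - b) ^ 2) / 2 := by
  have h := intervalIntegral.integral_comp_neg (a := a) (b := b) fun y => max 0 (y + k)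
  simp only [neg_add_eq_sub] at h
  rw [h, intervalIntegral_max_zero_add]
  simp only [neg_add_eq_sub]

theorem sq_sub_le_mul_sub_of_monotoneOn_sub_id {u : ℝ → ℝ} {s : Set ℝ}
    (hu : MonotoneOn (fun x => u x - x) s) {a b : ℝ} (ha : a ∈ s) (hb : b ∈ s) :
    (a - b) ^ 2 ≤ (u a - u b) * (a - b) := by
  rcases le_total a b with hab | hab
  · have := hu ha hb hab
    nlinarith
  · have := hu hb ha hab
    nlinarith

theorem abs_sub_le_of_convex_combination_eq_zero {u v : ℝ → ℝ} {s : Set ℝ}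
    (hu : MonotoneOn (fun x => u x - x) s) (hv : MonotoneOn (fun x => v x - x) s)
    {a b l l' L : ℝ} (ha : a ∈ s) (hb : b ∈ s) (hl : l ∈ Icc 0 1)
    (hza : l * u a + (1 - l) * v a = 0) (hzb : l' * u b + (1 - l') * v b = 0)
    (hL : |u b - v b| ≤ L) :
    |a - b| ≤ L * |l - l'| := by
  have hsu := sq_sub_le_mul_sub_of_monotoneOn_sub_id hu ha hb
  have hsv := sq_sub_le_mul_sub_of_monotoneOn_sub_id hv ha hb
  have key : |a - b| * |a - b| ≤ L * |l - l'| * |a - b| := calc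
    |a - b| * |a - b| = l * (a - b) ^ 2 + (1 - l) * (a - b) ^ 2 := by
      rw [abs_mul_abs_self]; ring
    _ ≤ l * ((u a - u b) * (a - b)) + (1 - l) * ((v a - v b) * (a - b)) := by
      gcongr
      · exact hl.1
      · linarith [hl.2]
    _ = (l - l') * (u b - v b) * (b - a) := by linear_combination (a - b) * (hza - hzb)
    _ ≤ |(l - l') * (u b - v b) * (b - a)| := le_abs_self _
    _ = |u b - v b| * |l - l'| * |a - b| := by rw [abs_mul, abs_mul, abs_sub_comm b a]; ring
    _ ≤ L * |l - l'| * |a - b| := by gcongr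
  rcases (abs_nonneg (a - b)).eq_or_lt with h | h
  · rw [← h]
    exact mul_nonneg ((abs_nonneg _).trans hL) (abs_nonneg _)
  · exact le_of_mul_le_mul_right key h

noncomputable def hingeRisk (α β t c : ℝ) : ℝ :=
  (max 0 (1 + t - c) ^ 2 - max 0 (1 + α - c) ^ 2 + max 0 (1 + c - t) ^ 2
    - max 0 (1 + c - β) ^ 2) / 2

noncomputable def hingeSlope (α β t c : ℝ) : ℝ :=
  max 0 (1 + c - t) - max 0 (1 + t - c) + max 0 (1 + α - c) - max 0 (1 + c - β)

theorem hingeExp_eq_mul_hingeRisk {α β t : ℝ} (w c : ℝ) (hαt : α ≤ t) (htβ : t ≤ β) :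
    hingeExp α β t w c = w * hingeRisk α β t c := by
  set g := fun x => max 0 (1 - Real.sign (x - t) * (x - c))
  have below : EqOn g (fun x => max 0 (x + (1 - c))) (uIoo α t) := fun x hx => by
    rw [uIoo_of_le hαt] at hx
    simp only [g, Real.sign_of_neg (sub_neg.2 hx.2)]
    ring_nf
  have above : EqOn g (fun x => max 0 (1 + c - x)) (uIoo t β) := fun x hx => by
    rw [uIoo_of_le htβ] at hx
    simp only [g, Real.sign_of_pos (sub_pos.2 hx.1)]
    ring_nf
  have hbelow : IntervalIntegrable g volume α t := (intervalIntegrable_congr_uIoo below).2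
    ((by fun_prop : Continuous fun x : ℝ => max 0 (x + (1 - c))).intervalIntegrable _ _)
  have habove : IntervalIntegrable g volume t β := (intervalIntegrable_congr_uIoo above).2
    ((by fun_prop : Continuous fun x : ℝ => max 0 (1 + c - x)).intervalIntegrable _ _)
  rw [hingeExp, integral_Icc_eq_integral_Ioc, ← intervalIntegral.integral_of_le (hαt.trans htβ),
    intervalIntegral.integral_mul_const,
    ← intervalIntegral.integral_add_adjacent_intervals hbelow habove,
    intervalIntegral.integral_congr_uIoo below, intervalIntegral.integral_congr_uIoo above,
    intervalIntegral_max_zero_add, intervalIntegral_max_zero_sub, hingeRisk]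
  ring_nf

theorem hasDerivAt_hingeRisk (α β t c : ℝ) :
    HasDerivAt (hingeRisk α β t) (hingeSlope α β t c) c := by
  have hdec (a : ℝ) : HasDerivAt (fun y => a - y) (-1) c := by
    simpa using (hasDerivAt_id c).const_sub a
  have hinc (a : ℝ) : HasDerivAt (fun y => 1 + y - a) 1 c := by
    simpa using ((hasDerivAt_id c).const_add 1).sub_const a
  refine (((((hdec (1 + t)).max_zero_sq.sub (hdec (1 + α)).max_zero_sq).add
    (hinc t).max_zero_sq).sub (hinc β).max_zero_sq).div_const 2).congr_deriv ?_
  simp only [hingeSlope]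
  ring

theorem hasDerivAt_hingeExp {α β t : ℝ} (w c : ℝ) (hαt : α ≤ t) (htβ : t ≤ β) :
    HasDerivAt (hingeExp α β t w) (w * hingeSlope α β t c) c := by
  rw [show hingeExp α β t w = fun y => w * hingeRisk α β t y from
    funext fun y => hingeExp_eq_mul_hingeRisk w y hαt htβ]
  exact (hasDerivAt_hingeRisk α β t c).const_mul w

theorem hingeSlope_mix_eq_zero_of_forall_le {α₀ β₀ α₁ β₁ t₀ t₁ w l x : ℝ}
    (hα₀ : α₀ ≤ t₀) (hβ₀ : t₀ ≤ β₀) (hα₁ : α₁ ≤ t₁) (hβ₁ : t₁ ≤ β₁) (hw : w ≠ 0)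
    (hmin : ∀ y, l * hingeExp α₀ β₀ t₀ w x + (1 - l) * hingeExp α₁ β₁ t₁ w x
      ≤ l * hingeExp α₀ β₀ t₀ w y + (1 - l) * hingeExp α₁ β₁ t₁ w y) :
    l * hingeSlope α₀ β₀ t₀ x + (1 - l) * hingeSlope α₁ β₁ t₁ x = 0 := by
  have hderiv := ((hasDerivAt_hingeExp w x hα₀ hβ₀).const_mul l).add
    ((hasDerivAt_hingeExp w x hα₁ hβ₁).const_mul (1 - l))
  have h0 := IsLocalMin.hasDerivAt_eq_zero (Eventually.of_forall hmin) hderiv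
  refine (mul_eq_zero.1 ?_).resolve_left hw
  rw [← h0]
  ring

theorem hingeSlope_neg {α β t c : ℝ} (hαt : α < t) (hc : c < t - 1) :
    hingeSlope α β t c < 0 := by
  simp only [hingeSlope, max_def]
  split_ifs <;> linarith

theorem hingeSlope_pos {α β t c : ℝ} (htβ : t < β) (hc : t + 1 < c) :
    0 < hingeSlope α β t c := by
  simp only [hingeSlope, max_def]
  split_ifs <;> linarith

theorem monotoneOn_hingeSlope_sub_id (α β t : ℝ) :
    MonotoneOn (fun x => hingeSlope α β t x - x) (Icc (α + 1) (β - 1)) := by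
  intro x hx y hy hxy
  simp only [hingeSlope, max_def]
  split_ifs <;> linarith [hx.1, hx.2, hy.1, hy.2]

theorem abs_hingeSlope_sub_hingeSlope_le {α₀ β₀ α₁ β₁ t₀ t₁ x : ℝ} (ht : t₀ ≤ t₁)
    (hx₀ : x ∈ Icc (α₀ + 1) (β₀ - 1)) (hx₁ : x ∈ Icc (α₁ + 1) (β₁ - 1)) :
    |hingeSlope α₀ β₀ t₀ x - hingeSlope α₁ β₁ t₁ x| ≤ t₁ - t₀ + 2 := by
  rw [abs_le]
  simp only [hingeSlope, max_def]
  split_ifs <;> constructor <;> linarith [hx₀.1, hx₀.2, hx₁.1, hx₁.2]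

theorem mem_Icc_of_hingeSlope_mix_eq_zero {α₀ β₀ α₁ β₁ t₀ t₁ l x : ℝ}
    (hα₀ : α₀ < t₀) (hα₁ : α₁ < t₁) (ht : t₀ ≤ t₁) (hβ₀ : t₀ < β₀) (hβ₁ : t₁ < β₁)
    (hl : l ∈ Icc 0 1) (hx : l * hingeSlope α₀ β₀ t₀ x + (1 - l) * hingeSlope α₁ β₁ t₁ x = 0) :
    x ∈ Icc (t₀ - 1) (t₁ + 1) := by
  obtain ⟨hl₀, hl₁⟩ := hl
  constructor
  · by_contra! hlt
    have h₀ := hingeSlope_neg (β := β₀) hα₀ hlt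
    have h₁ := hingeSlope_neg (β := β₁) hα₁ (show x < t₁ - 1 by linarith)
    have := convex_Iio (0 : ℝ) h₀ h₁ hl₀ (sub_nonneg.2 hl₁) (add_sub_cancel l 1)
    simp only [smul_eq_mul, mem_Iio] at this
    linarith
  · by_contra! hgt
    have h₀ := hingeSlope_pos (α := α₀) hβ₀ (show t₀ + 1 < x by linarith)
    have h₁ := hingeSlope_pos (α := α₁) hβ₁ hgt
    have := convex_Ioi (0 : ℝ) h₀ h₁ hl₀ (sub_nonneg.2 hl₁) (add_sub_cancel l 1)
    simp only [smul_eq_mul, mem_Ioi] at this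
    linarith

theorem stmt_17 (α₀ β₀ α₁ β₁ t₀ t₁ : ℝ)
    (h1 : α₀ + 1 < α₁ + 1) (h2 : α₁ + 1 < t₀ - 1) (h3 : t₀ + 1 < t₁ - 1)
    (h4 : t₁ + 1 < β₀ - 1) (h5 : β₀ - 1 < β₁ - 1)
    (hw : β₀ - α₀ = β₁ - α₁)
    (c : ℝ → ℝ)
    (hmin : ∀ lam ∈ Set.Icc (0:ℝ) 1, ∀ y,
      lam * hingeExp α₀ β₀ t₀ (1 / (β₀ - α₀)) (c lam)
          + (1 - lam) * hingeExp α₁ β₁ t₁ (1 / (β₁ - α₁)) (c lam)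
        ≤ lam * hingeExp α₀ β₀ t₀ (1 / (β₀ - α₀)) y
          + (1 - lam) * hingeExp α₁ β₁ t₁ (1 / (β₁ - α₁)) y) :
    ∀ lam ∈ Set.Icc (0:ℝ) 1, ∀ lam' ∈ Set.Icc (0:ℝ) 1,
      |c lam - c lam'| ≤ 2 * (t₁ - t₀ + 1) * |lam - lam'| := by
  rw [← hw] at hmin
  have hslope (lam : ℝ) (hlam : lam ∈ Icc (0:ℝ) 1) :
      lam * hingeSlope α₀ β₀ t₀ (c lam) + (1 - lam) * hingeSlope α₁ β₁ t₁ (c lam) = 0 :=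
    hingeSlope_mix_eq_zero_of_forall_le (by linarith) (by linarith) (by linarith) (by linarith)
      (one_div_pos.2 (by linarith)).ne' (hmin lam hlam)
  have hloc (lam : ℝ) (hlam : lam ∈ Icc (0:ℝ) 1) : c lam ∈ Icc (t₀ - 1) (t₁ + 1) :=
    mem_Icc_of_hingeSlope_mix_eq_zero (by linarith) (by linarith) (by linarith)
      (by linarith) (by linarith) hlam (hslope lam hlam)
  have hmono {α β t : ℝ} (hα : α + 1 ≤ t₀ - 1) (hβ : t₁ + 1 ≤ β - 1) :
      MonotoneOn (fun x => hingeSlope α β t x - x) (Icc (t₀ - 1) (t₁ + 1)) :=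
    (monotoneOn_hingeSlope_sub_id α β t).mono (Icc_subset_Icc hα hβ)
  intro lam hlam lam' hlam'
  obtain ⟨hc'₁, hc'₂⟩ := hloc lam' hlam'
  calc |c lam - c lam'| ≤ (t₁ - t₀ + 2) * |lam - lam'| :=
        abs_sub_le_of_convex_combination_eq_zero (hmono (by linarith) (by linarith))
          (hmono (by linarith) (by linarith)) (hloc lam hlam) ⟨hc'₁, hc'₂⟩ hlam
          (hslope lam hlam) (hslope lam' hlam')
          (abs_hingeSlope_sub_hingeSlope_le (by linarith)
            ⟨by linarith, by linarith⟩ ⟨by linarith, by linarith⟩)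
    _ ≤ 2 * (t₁ - t₀ + 1) * |lam - lam'| := by gcongr; linarith
end
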